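/- arXiv:1011.5930 — 4 statements merged into one kernel-verified Lean document; each statement's English description precedes it below -/
import Mathlib

section
/- The two-wire whurl relation is an involution: applying the birational map (x¹,x²,y¹,y²) ↦ (x'¹,x'²,y'¹,y'²) with y and x roles swapped (i.e., applying the relation again with (y',x') in place of (x,y)) recovers the original parameters. -/
/-!
Writing `r = (x² + y¹) / (x¹ + y²)`, the whurl map rescales the point: `x¹` and `y²` are
multiplied by `r`, while `x²` and `y¹` are divided by it. Rescaling by `r` turns the ratio of the
image into `r / r² = r⁻¹`, so the second application rescales by `r⁻¹` and undoes the first.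
-/

/-- The two-wire whurl relation, viewed as the map
`R : (x¹,x²,y¹,y²) ↦ (y'¹,y'²,x'¹,x'²)`. -/
noncomputable def whurl2 (p : ℝ × ℝ × ℝ × ℝ) : ℝ × ℝ × ℝ × ℝ :=
  let x1 := p.1; let x2 := p.2.1; let y1 := p.2.2.1; let y2 := p.2.2.2
  (x1 * (x2 + y1) / (y2 + x1),
   x2 * (x1 + y2) / (y1 + x2),
   y1 * (x1 + y2) / (y1 + x2),
   y2 * (x2 + y1) / (y2 + x1))

namespace Whurl2

variable {K : Type*} [Field K]

def ratio (p : K × K × K × K) : K :=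
  (p.2.1 + p.2.2.1) / (p.1 + p.2.2.2)

def scale (r : K) (p : K × K × K × K) : K × K × K × K :=
  (p.1 * r, p.2.1 * r⁻¹, p.2.2.1 * r⁻¹, p.2.2.2 * r)

@[simp]
theorem scale_one (p : K × K × K × K) : scale 1 p = p := by
  simp [scale]

theorem scale_scale (a b : K) (p : K × K × K × K) : scale a (scale b p) = scale (b * a) p := by
  simp only [scale, mul_inv, mul_assoc]

theorem ratio_scale (r : K) (p : K × K × K × K) : ratio (scale r p) = ratio p / r ^ 2 := by
  simp only [ratio, scale, ← add_mul, div_eq_mul_inv, mul_inv, sq]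
  ring

end Whurl2

open Whurl2

theorem whurl2_eq_scale (p : ℝ × ℝ × ℝ × ℝ) : whurl2 p = scale (ratio p) p := by
  simp only [whurl2, scale, ratio, inv_div]
  refine Prod.ext ?_ (Prod.ext ?_ (Prod.ext ?_ ?_)) <;> dsimp only <;> ring

theorem ratio_whurl2 {p : ℝ × ℝ × ℝ × ℝ} (hp : ratio p ≠ 0) : ratio (whurl2 p) = (ratio p)⁻¹ := by
  rw [whurl2_eq_scale, ratio_scale]
  field_simp

-- `ratio p ≠ 0` also excludes `x¹ + y² = 0`, since then `ratio p` is a division by zero.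
theorem whurl2_whurl2 {p : ℝ × ℝ × ℝ × ℝ} (hp : ratio p ≠ 0) : whurl2 (whurl2 p) = p := by
  rw [whurl2_eq_scale (whurl2 p), ratio_whurl2 hp, whurl2_eq_scale p, scale_scale,
    mul_inv_cancel₀ hp, scale_one]

/-- The two-wire whurl relation is an involution on the positive orthant. -/
theorem whurl2_involution (x1 x2 y1 y2 : ℝ)
    (hx1 : 0 < x1) (hx2 : 0 < x2) (hy1 : 0 < y1) (hy2 : 0 < y2) :
    whurl2 (whurl2 (x1, x2, y1, y2)) = (x1, x2, y1, y2) := by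
  exact whurl2_whurl2 (div_pos (add_pos hx2 hy1) (add_pos hx1 hy2)).ne'
end

section
/- The infinite-capacity box-basket-ball carrier interaction factors as the composition of the basket-exchange map (d'' = d - min(d,e) + b, e'' = e - min(d,e) + b, f'' = f, with carrier basket count becoming min(d,e)) followed by the ball-exchange map (d' = d'' + f'' - min(c, d''), e' = e'', f' = min(c, d''), with carrier ball count becoming c + f'' - min(c, d'')). That is, the composite equals the map d' = d + b + f - min(e+c, d+c, d+b), e' = e + b - min(d,e), f' = min(e+c, d+c, d+b) - min(d,e), c' = c + f + min(d,e) - min(e+c, d+c, d+b). -/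
/-! The basket exchange removes `min d e` baskets from the site, so the ball exchange sees
capacity `d - min d e + b`. Shifting by `min d e`, the number of balls it places is
`min (c + min d e) (d + b) - min d e`, and `c + min d e = min (e + c) (d + c)`; the remaining
components are then linear rearrangements. -/

theorem min_sub_min_add_eq_min_min_sub_min {α : Type*} [AddCommGroup α] [LinearOrder α]
    [IsOrderedAddMonoid α] (b c d e : α) :
    min c (d - min d e + b) = min (min (e + c) (d + c)) (d + b) - min d e := by
  rw [min_add_add_right, min_comm e d, ← min_sub_sub_right, add_sub_cancel_left, sub_add_eq_add_sub]

theorem bbb_carrier_factorization_general (b c d e f : ℤ) :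
    -- basket-exchange map
    let d'' := d - min d e + b
    let e'' := e - min d e + b
    let f'' := f
    -- ball-exchange map applied afterwards
    ((d'' + f'' - min c d'' = d + b + f - min (min (e+c) (d+c)) (d+b)) ∧
     (e'' = e + b - min d e) ∧
     (min c d'' = min (min (e+c) (d+c)) (d+b) - min d e) ∧
     (c + f'' - min c d'' = c + f + min d e - min (min (e+c) (d+c)) (d+b))) := by
  intro d'' e'' f''
  have balls_placed := min_sub_min_add_eq_min_min_sub_min b c d e
  refine ⟨?_, ?_, balls_placed, ?_⟩ <;> omega

/-- The infinite-capacity box-basket-ball carrier interaction factors as the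
basket-exchange map followed by the ball-exchange map. -/
theorem bbb_carrier_factorization (b c d e f : ℤ)
    (hb : 0 ≤ b) (hc : 0 ≤ c) (hd : 0 ≤ d) (he : 0 ≤ e) (hf : 0 ≤ f) :
    -- basket-exchange map
    let d'' := d - min d e + b
    let e'' := e - min d e + b
    let f'' := f
    -- ball-exchange map applied afterwards
    ((d'' + f'' - min c d'' = d + b + f - min (min (e+c) (d+c)) (d+b)) ∧
     (e'' = e + b - min d e) ∧
     (min c d'' = min (min (e+c) (d+c)) (d+b) - min d e) ∧
     (c + f'' - min c d'' = c + f + min d e - min (min (e+c) (d+c)) (d+b))) :=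
  bbb_carrier_factorization_general b c d e f
end

section
/- If the infinite-capacity carrier (b, c) passes through a vacuum site (d,e,f) = (1,0,0), then the output carrier has b' = 0 and c' = c - min(c, b+1), and in particular if c > 0 then c' < c; consequently, after passing through sufficiently many consecutive vacuum sites, the carrier returns to the empty state (0,0). -/
/-- The infinite-capacity carrier `(b, c)` passing through a vacuum site
`(d,e,f) = (1,0,0)`: output carrier is `(min 1 0, c + 0 + min 1 0 - min(0+c, 1+c, 1+b))`. -/
def vacuumStep (p : ℕ × ℕ) : ℕ × ℕ :=
  (min 1 0, p.2 + 0 + min 1 0 - min (min (0 + p.2) (1 + p.2)) (1 + p.1))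

/-! A vacuum site empties the `b` slot, and from then on each further vacuum site removes exactly
`min c 1` balls, so `c + 1` sites bring the carrier back to `(0, 0)`. -/

lemma vacuumStep_mk (b c : ℕ) : vacuumStep (b, c) = (0, c - min c (b + 1)) := by
  ext <;> simp only [vacuumStep] <;> omega

lemma vacuumStep_snd_lt {b c : ℕ} (hc : 0 < c) : (vacuumStep (b, c)).2 < c := by
  rw [vacuumStep_mk]
  omega

lemma vacuumStep_iterate_zero_of_le {n c : ℕ} (hc : c ≤ n) :
    vacuumStep^[n] (0, c) = (0, 0) := by
  induction n generalizing c with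
  | zero => rw [Nat.le_zero.mp hc, Function.iterate_zero_apply]
  | succ n ih =>
    rw [Function.iterate_succ_apply, vacuumStep_mk]
    exact ih (by omega)

/-- Passing the infinite-capacity carrier through a vacuum site gives `b' = 0` and
`c' = c - min(c, b+1)`; if `c > 0` then `c' < c`; iterating through sufficiently many
vacuum sites returns the carrier to the empty state `(0,0)`. -/
theorem bbb_carrier_through_vacuum (b c : ℕ) :
    (vacuumStep (b, c)).1 = 0 ∧
    (vacuumStep (b, c)).2 = c - min c (b + 1) ∧
    (0 < c → (vacuumStep (b, c)).2 < c) ∧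
    ∃ N, vacuumStep^[N] (b, c) = (0, 0) := by
  refine ⟨by rw [vacuumStep_mk], by rw [vacuumStep_mk], vacuumStep_snd_lt, c + 1, ?_⟩
  rw [Function.iterate_succ_apply, vacuumStep_mk]
  exact vacuumStep_iterate_zero_of_le (Nat.sub_le c _)
end

section
/- For the finite-capacity carrier with a + c = b + ℓ (ℓ ≥ 1) interacting with a vacuum site (1,0,0) via the tropical three-wire whurl relation, the output carrier satisfies b' = 0 and c' < c whenever c > 0; hence iterating through n vacuum sites for n large enough returns the carrier to the state (ℓ, 0, 0). -/
/-!
Once `a ≥ 0` and `b ≤ a + c`, every minimum in the whurl relation resolves: the vacuum site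
absorbs all of `b`, moves `min c (b + 1)` units from `c` to `a`, and the conserved quantity
`a - b + c` is untouched. From then on `b = 0`, so each further vacuum site moves exactly one
unit from `c` to `a` until `c` is exhausted.
-/

/-- The finite-capacity carrier `(a,b,c)` passing through a vacuum site
`(d,e,f) = (1,0,0)` via the tropical three-wire whurl relation. -/
def vacuumStepL (p : ℤ × ℤ × ℤ) : ℤ × ℤ × ℤ :=
  let a := p.1; let b := p.2.1; let c := p.2.2
  (a - min (min (a + b) (a + c)) (b + 0) + min (min (0 + c) (1 + c)) (1 + b),
   b - min (min (a + b) (a + c)) (b + 0) + min (min (a + 0) (1 + 0)) (0 + 0),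
   c - min (min (0 + c) (1 + c)) (1 + b) + min (min (a + 0) (1 + 0)) (0 + 0))

theorem vacuumStepL_eq {a b c : ℤ} (ha : 0 ≤ a) (hbac : b ≤ a + c) :
    vacuumStepL (a, b, c) = (a - b + min c (b + 1), 0, c - min c (b + 1)) := by
  have hmin_abc : min (min (a + b) (a + c)) (b + 0) = b := by omega
  have hmin_c : min (min (0 + c) (1 + c)) (1 + b) = min c (b + 1) := by omega
  have hmin_a : min (min (a + 0) (1 + 0)) (0 + 0) = 0 := by omega
  simp only [vacuumStepL, hmin_abc, hmin_c, hmin_a]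
  ext <;> simp

theorem vacuumStepL_eq_of_snd_eq_zero {a c : ℤ} (ha : 0 ≤ a) (hc : 1 ≤ c) :
    vacuumStepL (a, 0, c) = (a + 1, 0, c - 1) := by
  rw [vacuumStepL_eq ha (by omega), min_eq_right (by omega)]
  simp

theorem vacuumStepL_iterate_of_snd_eq_zero (n : ℕ) {a : ℤ} (ha : 0 ≤ a) :
    vacuumStepL^[n] (a, 0, n) = (a + n, 0, 0) := by
  induction n generalizing a with
  | zero => simp
  | succ n ih =>
    rw [Function.iterate_succ_apply, vacuumStepL_eq_of_snd_eq_zero ha (by omega)]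
    push_cast
    rw [add_sub_cancel_right, ih (by omega)]
    congr 1
    ring

theorem bbb_finite_carrier_through_vacuum_general (a b c ℓ : ℤ)
    (ha : 0 ≤ a) (hb : 0 ≤ b) (hl : 1 ≤ ℓ) (hcap : a - b + c = ℓ) :
    (vacuumStepL (a, b, c)).2.1 = 0 ∧
    (0 < c → (vacuumStepL (a, b, c)).2.2 < c) ∧
    ∃ N, vacuumStepL^[N] (a, b, c) = (ℓ, 0, 0) := by
  rw [vacuumStepL_eq ha (by omega)]
  refine ⟨rfl, fun hc => by simp only; omega, ?_⟩
  obtain ⟨k, hk⟩ : ∃ k : ℕ, c - min c (b + 1) = k := ⟨_, (Int.toNat_of_nonneg (by omega)).symm⟩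
  refine ⟨k + 1, ?_⟩
  rw [Function.iterate_succ_apply, vacuumStepL_eq ha (by omega), hk,
    vacuumStepL_iterate_of_snd_eq_zero k (by omega)]
  congr 1
  omega

/-- For a finite-capacity carrier with `a - b + c = ℓ ≥ 1`, passing through a vacuum
site gives `b' = 0` and `c' < c` whenever `c > 0`; iterating through sufficiently many
vacuum sites returns the carrier to the state `(ℓ, 0, 0)`. -/
theorem bbb_finite_carrier_through_vacuum (a b c ℓ : ℤ)
    (ha : 0 ≤ a) (hb : 0 ≤ b) (hc : 0 ≤ c) (hl : 1 ≤ ℓ) (hcap : a - b + c = ℓ) :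
    (vacuumStepL (a, b, c)).2.1 = 0 ∧
    (0 < c → (vacuumStepL (a, b, c)).2.2 < c) ∧
    ∃ N, vacuumStepL^[N] (a, b, c) = (ℓ, 0, 0) :=
  bbb_finite_carrier_through_vacuum_general a b c ℓ ha hb hl hcap
end
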